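/- (Lemma 3) Assume ω = u + iv is in the upper half-plane with 0 ≤ u ≤ 1, k² > u (k = |ω|), and u, k² ∈ ℚ. Then there exists T₀ = T₀(ω) such that for every γ = (a b; c d) ∈ SL₂(ℤ) with c > 0, cd(ck²+du)(cu+d) ≠ 0, k²Y_γ > X_γ, and T_γ > T₀, both Φ(γ) and Ψ(γ) lie in the open interval J_γ, where: if d > 0 then J_γ = (b/d, a/c); if d < 0 and cu+d > 0 then J_γ = ((a+b)/(c+d), a/c); if d < 0 and ck²+du < 0 then J_γ = (b/d, (a+b)/(c+d)); if d < 0 and cu+d < 0 < ck²+du then J_γ = (a/c, b/d). -/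

import Mathlib

set_option maxHeartbeats 1600000


open Complex Matrix MatrixGroups UpperHalfPlane Real

noncomputable section

/-- real entry `γ i j` of an integer matrix. -/
def ent (γ : SL(2,ℤ)) (i j : Fin 2) : ℝ := ((γ i j : ℤ) : ℝ)

/-- `X_γ = |aω+b|²`. -/
def Xg (ω : ℂ) (γ : SL(2,ℤ)) : ℝ := (‖ent γ 0 0 * ω + (ent γ 0 1 : ℂ)‖) ^ 2

/-- `Y_γ = |cω+d|²`. -/
def Yg (ω : ℂ) (γ : SL(2,ℤ)) : ℝ := (‖ent γ 1 0 * ω + (ent γ 1 1 : ℂ)‖) ^ 2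

/-- `Z_γ = ac|ω|² + bd + u(ad+bc)`. -/
def Zg (ω : ℂ) (γ : SL(2,ℤ)) : ℝ :=
  ent γ 0 0 * ent γ 1 0 * (‖ω‖) ^ 2 + ent γ 0 1 * ent γ 1 1
    + ω.re * (ent γ 0 0 * ent γ 1 1 + ent γ 0 1 * ent γ 1 0)

/-- `T_γ = ‖γ‖² = X_γ + k²Y_γ − 2uZ_γ`. -/
def Tg (ω : ℂ) (γ : SL(2,ℤ)) : ℝ :=
  Xg ω γ + (‖ω‖) ^ 2 * Yg ω γ - 2 * ω.re * Zg ω γ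

/-- `Φ(γ) = Re(γω)`. -/
def Phi (ω : ℍ) (γ : SL(2,ℤ)) : ℝ := ((γ • ω : ℍ) : ℂ).re

/-- `ε_T = (T_γ − √(T_γ² − Δ²))/Δ` with `Δ = 2v²`. -/
def epsT (ω : ℂ) (γ : SL(2,ℤ)) : ℝ :=
  (Tg ω γ - Real.sqrt ((Tg ω γ) ^ 2 - (2 * ω.im ^ 2) ^ 2)) / (2 * ω.im ^ 2)

/-- `Ψ(γ) = (Z_γ − u ε_T)/(Y_γ − ε_T)`, the x-intercept of the geodesic `ω → γω`. -/
def Psi (ω : ℍ) (γ : SL(2,ℤ)) : ℝ :=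
  (Zg ω γ - (ω : ℂ).re * epsT ω γ) / (Yg ω γ - epsT ω γ)

/-- Purely real arithmetic core. -/
lemma farey_core (u v k2 Q A B C D X Y Z e : ℝ)
    (hv : 0 < v) (hu0 : 0 ≤ u) (hu1 : u ≤ 1) (hk : k2 = u^2 + v^2) (hku : u < k2)
    (hY : Y = (C*u+D)^2 + (C*v)^2)
    (hZ : Z = (A*u+B)*(C*u+D) + A*C*v^2)
    (hdet : A*D - B*C = 1)
    (hC : 1 ≤ C)
    (hQ : 0 < Q)
    (hq1 : 1/Q ≤ |C*u + D|) (hq2 : 1/Q ≤ |C*k2 + D*u|)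
    (hq3 : D < 0 → 1/Q ≤ C*(k2-u) + D*(u-1))
    (he0 : 0 ≤ e) (heY : e < Y)
    (hE1 : |e*(A - C*u)| < 1/Q)
    (hE2 : |e*(D*u - B)| < 1/Q)
    (hE3 : |e*((C+D)*u - (A+B))| < 1/Q) :
    (0 < D → (Z - u*e)/(Y - e) ∈ Set.Ioo (B/D) (A/C)) ∧
    (D < 0 → 0 < C*u + D → (Z - u*e)/(Y-e) ∈ Set.Ioo ((A+B)/(C+D)) (A/C)) ∧
    (D < 0 → C*k2 + D*u < 0 → (Z-u*e)/(Y-e) ∈ Set.Ioo (B/D) ((A+B)/(C+D))) ∧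
    (D < 0 → C*u+D < 0 → 0 < C*k2+D*u → (Z-u*e)/(Y-e) ∈ Set.Ioo (A/C) (B/D)) := by
  have hC0 : 0 < C := by linarith
  have hYe : 0 < Y - e := by linarith
  have hk2pos : 0 < k2 := lt_of_le_of_lt hu0 hku
  have F1 : A*(Y-e) - C*(Z-u*e) = (C*u+D) - e*(A - C*u) := by
    rw [hY, hZ]; linear_combination (C*u+D)*hdet
  have F2 : D*(Z-u*e) - B*(Y-e) = (C*k2 + D*u) - e*(D*u - B) := by
    rw [hY, hZ, hk]; linear_combination (C*(u^2+v^2)+D*u)*hdet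
  have F3 : (C+D)*(Z-u*e) - (A+B)*(Y-e)
      = (C*(k2-u)+D*(u-1)) - e*((C+D)*u-(A+B)) := by linear_combination F2 - F1
  obtain ⟨hE1a, hE1b⟩ := abs_lt.1 hE1
  obtain ⟨hE2a, hE2b⟩ := abs_lt.1 hE2
  obtain ⟨hE3a, hE3b⟩ := abs_lt.1 hE3
  have hCu : 0 ≤ C*u := mul_nonneg hC0.le hu0
  refine ⟨?_, ?_, ?_, ?_⟩
  · intro hD
    have h1 : 0 < C*u+D := by linarith
    have hq1' : 1/Q ≤ C*u+D := by rwa [abs_of_pos h1] at hq1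
    have h2 : 0 < C*k2+D*u := by
      linarith [mul_pos hC0 hk2pos, mul_nonneg hD.le hu0]
    have hq2' : 1/Q ≤ C*k2+D*u := by rwa [abs_of_pos h2] at hq2
    constructor
    · rw [div_lt_div_iff₀ hD hYe]; linarith
    · rw [div_lt_div_iff₀ hYe hC0]; linarith
  · intro hD h1
    have hq1' : 1/Q ≤ C*u+D := by rwa [abs_of_pos h1] at hq1
    have hCD : 0 < C+D := by
      linarith [mul_nonneg hC0.le (by linarith : (0:ℝ) ≤ 1-u)]
    have hq3' := hq3 hD
    constructor
    · rw [div_lt_div_iff₀ hCD hYe]; linarith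
    · rw [div_lt_div_iff₀ hYe hC0]; linarith
  · intro hD h3
    have hq2' : 1/Q ≤ -(C*k2+D*u) := by rwa [abs_of_neg h3] at hq2
    have hq3' := hq3 hD
    have hu' : 0 < u := by
      rcases hu0.lt_or_eq with h | h
      · exact h
      · exfalso; rw [← h] at h3; linarith [mul_pos hC0 hk2pos]
    have hCD : C + D < 0 := by
      by_contra h
      push_neg at h
      have h4 : 0 ≤ (C+D)*u := mul_nonneg h hu'.le
      have h5 : 0 < C*(k2-u) := mul_pos hC0 (sub_pos.2 hku)
      linarith
    constructor
    · rw [show B/D = (-B)/(-D) by rw [neg_div_neg_eq],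
        div_lt_div_iff₀ (by linarith : (0:ℝ) < -D) hYe]
      linarith
    · rw [show (A+B)/(C+D) = (-(A+B))/(-(C+D)) by rw [neg_div_neg_eq],
        div_lt_div_iff₀ hYe (by linarith : (0:ℝ) < -(C+D))]
      linarith
  · intro hD h1 h2
    have hq1' : 1/Q ≤ -(C*u+D) := by rwa [abs_of_neg h1] at hq1
    have hq2' : 1/Q ≤ C*k2+D*u := by rwa [abs_of_pos h2] at hq2
    constructor
    · rw [div_lt_div_iff₀ hC0 hYe]; linarith
    · rw [show B/D = (-B)/(-D) by rw [neg_div_neg_eq],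
        div_lt_div_iff₀ hYe (by linarith : (0:ℝ) < -D)]
      linarith

lemma eps_aux (T d : ℝ) (hd : 0 < d) (hT : d < T) :
    0 ≤ (T - Real.sqrt (T^2 - d^2))/d ∧ ((T - Real.sqrt (T^2 - d^2))/d) * T ≤ d := by
  have h0 : 0 ≤ T^2 - d^2 := by nlinarith
  have hs := Real.sq_sqrt h0
  have hs0 := Real.sqrt_nonneg (T^2 - d^2)
  set s := Real.sqrt (T^2 - d^2) with hsdef
  have hsT : s ≤ T := by nlinarith
  constructor
  · exact div_nonneg (by linarith) hd.le
  · rw [div_mul_eq_mul_div, div_le_iff₀ hd]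
    nlinarith [mul_nonneg hs0 (sub_nonneg.2 hsT)]

lemma ratio_aux (S T M Q W : ℝ) (hS : 0 ≤ S) (hT : 0 < T) (hW : 0 < W) (hM : 0 ≤ M)
    (hQ : 0 < Q)
    (h1 : S * (T^2*W) ≤ 16*M*T*W)
    (h2 : 16*M*Q^2 < T) :
    S*Q^2 < 1 := by
  have key : S*T ≤ 16*M := by nlinarith [h1, mul_pos hT hW]
  nlinarith [mul_le_mul_of_nonneg_right key (sq_nonneg Q), h2, hT, hS]

lemma ebound (v k2 Q T e E SUM : ℝ)
    (hv2 : 0 < v^2) (hk2pos : 0 < k2) (hQ0 : 0 < Q) (hTpos : 0 < T)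
    (hsum : SUM*v^4 ≤ (2*v^2+3)*(k2+1)*T)
    (p1 : e^2*T^2 ≤ 4*v^4)
    (hTbig : 2*v^2 + 2 + 16*(2*v^2+3)*(k2+1)*Q^2 < T)
    (hE2 : E^2 ≤ 4*SUM) :
    |e*E| < 1/Q := by
  have q1 : E^2*v^4 ≤ 4*((2*v^2+3)*(k2+1)*T) := by
    have := mul_le_mul_of_nonneg_right hE2 (by positivity : (0:ℝ) ≤ v^4)
    linarith [this, hsum]
  have p2 : (e*E)^2 * (T^2*v^4) ≤ 4*v^4 * (4*((2*v^2+3)*(k2+1)*T)) := by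
    have := mul_le_mul p1 q1 (by positivity : (0:ℝ) ≤ E^2*v^4)
      (by positivity : (0:ℝ) ≤ 4*v^4)
    linarith [this]
  have hv4 : (0:ℝ) < v^4 := by nlinarith [hv2]
  have p3 : (e*E)^2*Q^2 < 1 := by
    apply ratio_aux ((e*E)^2) T ((2*v^2+3)*(k2+1)) Q (v^4) (sq_nonneg _) hTpos
      hv4 (by nlinarith [hk2pos, hv2] : (0:ℝ) ≤ (2*v^2+3)*(k2+1)) hQ0
    · linarith [p2]
    · linarith [hTbig, hv2]
  have p4 : |e*E| * Q < 1 := by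
    nlinarith [abs_nonneg (e*E), _root_.sq_abs (e*E), mul_nonneg (abs_nonneg (e*E)) hQ0.le,
      sq_nonneg (|e*E| * Q - 1)]
  rw [lt_div_iff₀ hQ0]
  exact p4

lemma main_gamma (u v k2 Q A B C D X Y Z T e phi psi : ℝ)
    (hv : 0 < v) (hu0 : 0 ≤ u) (hu1 : u ≤ 1) (hk : k2 = u^2 + v^2) (hku : u < k2)
    (hX : X = (A*u+B)^2 + (A*v)^2)
    (hY : Y = (C*u+D)^2 + (C*v)^2)
    (hZ : Z = (A*u+B)*(C*u+D) + A*C*v^2)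
    (hdet : A*D - B*C = 1)
    (hC : 1 ≤ C) (hQ0 : 0 < Q)
    (hq1 : 1/Q ≤ |C*u + D|) (hq2 : 1/Q ≤ |C*k2 + D*u|)
    (hq3 : D < 0 → 1/Q ≤ C*(k2-u) + D*(u-1))
    (he0 : 0 ≤ e) (heT : e*T ≤ 2*v^2)
    (hT : T = X + k2*Y - 2*u*Z)
    (hphi : phi = Z/Y) (hpsi : psi = (Z - u*e)/(Y - e))
    (hTbig : 2*v^2 + 2 + 16*(2*v^2+3)*(k2+1)*Q^2 < T) :
    (0 < D → phi ∈ Set.Ioo (B/D) (A/C) ∧ psi ∈ Set.Ioo (B/D) (A/C)) ∧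
    (D < 0 → 0 < C*u + D →
        phi ∈ Set.Ioo ((A+B)/(C+D)) (A/C) ∧ psi ∈ Set.Ioo ((A+B)/(C+D)) (A/C)) ∧
    (D < 0 → C*k2 + D*u < 0 →
        phi ∈ Set.Ioo (B/D) ((A+B)/(C+D)) ∧ psi ∈ Set.Ioo (B/D) ((A+B)/(C+D))) ∧
    (D < 0 → C*u+D < 0 → 0 < C*k2+D*u →
        phi ∈ Set.Ioo (A/C) (B/D) ∧ psi ∈ Set.Ioo (A/C) (B/D)) := by
  have hk2pos : 0 < k2 := lt_of_le_of_lt hu0 hku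
  have hC0 : 0 < C := by linarith
  have hu2 : u^2 ≤ 1 := by nlinarith
  have hv2 : 0 < v^2 := by positivity
  have hQsq : 0 < 16*(2*v^2+3)*(k2+1)*Q^2 :=
    mul_pos (mul_pos (mul_pos (by norm_num) (by linarith)) (by linarith)) (pow_pos hQ0 2)
  have hTpos : 0 < T := by linarith
  have hC2 : 1 ≤ C^2 := by nlinarith
  have hYlb : v^2 ≤ Y := by
    rw [hY]
    nlinarith [sq_nonneg (C*u+D), mul_le_mul_of_nonneg_right hC2 hv2.le]
  have hT2 : 2 < T := by linarith
  have heY : e < Y := by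
    by_contra hcon
    push_neg at hcon
    have h1 : v^2 ≤ e := le_trans hYlb hcon
    have h2 := mul_le_mul_of_nonneg_right h1 hTpos.le
    have h3 := mul_lt_mul_of_pos_left hT2 hv2
    linarith [heT, h2, h3]
  have hY0 : 0 < Y := by linarith
  -- bounds on entries
  have hsumX : (A^2+B^2)*v^2 ≤ (2*v^2+3)*X := by
    rw [hX]
    linarith [mul_nonneg (sq_nonneg (2*A*u+B)) hv2.le,
      mul_nonneg (mul_nonneg (by linarith : (0:ℝ) ≤ 1 - u^2) (sq_nonneg A)) hv2.le,
      mul_nonneg (sq_nonneg (A*v)) hv2.le, sq_nonneg (A*u+B)]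
  have hsumY : (C^2+D^2)*v^2 ≤ (2*v^2+3)*Y := by
    rw [hY]
    linarith [mul_nonneg (sq_nonneg (2*C*u+D)) hv2.le,
      mul_nonneg (mul_nonneg (by linarith : (0:ℝ) ≤ 1 - u^2) (sq_nonneg C)) hv2.le,
      mul_nonneg (sq_nonneg (C*v)) hv2.le, sq_nonneg (C*u+D)]
  have hXT : v^2*X ≤ k2*T := by
    rw [hT, hX, hY, hZ, hk]
    linarith [sq_nonneg (u*(A*u+B) - (u^2+v^2)*(C*u+D)), sq_nonneg ((u*A - (u^2+v^2)*C)*v)]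
  have hYT : v^2*Y ≤ T := by
    rw [hT, hX, hY, hZ, hk]
    linarith [sq_nonneg ((A*u+B) - u*(C*u+D)), sq_nonneg ((A - u*C)*v)]
  have hsum : (A^2+B^2+C^2+D^2)*v^4 ≤ (2*v^2+3)*(k2+1)*T := by
    have w1 := mul_le_mul_of_nonneg_right hsumX hv2.le
    have w2 := mul_le_mul_of_nonneg_right hsumY hv2.le
    have w3 := mul_le_mul_of_nonneg_left hXT (by positivity : (0:ℝ) ≤ 2*v^2+3)
    have w4 := mul_le_mul_of_nonneg_left hYT (by positivity : (0:ℝ) ≤ 2*v^2+3)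
    linarith [w1, w2, w3, w4]
  have p1 : e^2*T^2 ≤ 4*v^4 := by
    nlinarith [heT, mul_nonneg he0 hTpos.le, hv2]
  have hEb : ∀ E : ℝ, E^2 ≤ 4*(A^2+B^2+C^2+D^2) → |e*E| < 1/Q :=
    fun E hE2 => ebound v k2 Q T e E (A^2+B^2+C^2+D^2) hv2 hk2pos hQ0 hTpos hsum p1 hTbig hE2
  have hE1 : |e*(A - C*u)| < 1/Q := by
    apply hEb
    linarith [sq_nonneg (A + C*u), mul_nonneg (by linarith : (0:ℝ) ≤ 1 - u^2) (sq_nonneg C),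
      sq_nonneg B, sq_nonneg D, sq_nonneg A, sq_nonneg C]
  have hE2 : |e*(D*u - B)| < 1/Q := by
    apply hEb
    linarith [sq_nonneg (D*u + B), mul_nonneg (by linarith : (0:ℝ) ≤ 1 - u^2) (sq_nonneg D),
      sq_nonneg A, sq_nonneg C, sq_nonneg B, sq_nonneg D]
  have hE3 : |e*((C+D)*u - (A+B))| < 1/Q := by
    apply hEb
    linarith [sq_nonneg ((C+D)*u + (A+B)), sq_nonneg (C-D), sq_nonneg (A-B),
      mul_nonneg (by linarith : (0:ℝ) ≤ 1 - u^2) (sq_nonneg (C+D)),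
      sq_nonneg A, sq_nonneg B, sq_nonneg C, sq_nonneg D]
  have h0Q : (0:ℝ) < 1/Q := by positivity
  have hE10 : |(0:ℝ) * (A - C*u)| < 1/Q := by rw [zero_mul, abs_zero]; exact h0Q
  have hE20 : |(0:ℝ) * (D*u - B)| < 1/Q := by rw [zero_mul, abs_zero]; exact h0Q
  have hE30 : |(0:ℝ) * ((C+D)*u - (A+B))| < 1/Q := by rw [zero_mul, abs_zero]; exact h0Q
  have CORE0 := farey_core u v k2 Q A B C D X Y Z 0 hv hu0 hu1 hk hku hY hZ hdet hC hQ0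
    hq1 hq2 hq3 le_rfl (by linarith) hE10 hE20 hE30
  have CORE1 := farey_core u v k2 Q A B C D X Y Z e hv hu0 hu1 hk hku hY hZ hdet hC hQ0
    hq1 hq2 hq3 he0 heY hE1 hE2 hE3
  have hphi' : phi = (Z - u*0)/(Y - 0) := by rw [hphi]; norm_num
  rw [hphi', hpsi]
  exact ⟨fun h => ⟨CORE0.1 h, CORE1.1 h⟩,
    fun h h' => ⟨CORE0.2.1 h h', CORE1.2.1 h h'⟩,
    fun h h' => ⟨CORE0.2.2.1 h h', CORE1.2.2.1 h h'⟩,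
    fun h h' h'' => ⟨CORE0.2.2.2 h h' h'', CORE1.2.2.2 h h' h''⟩⟩

/-- Lemma 3: if `0 ≤ u ≤ 1`, `k² > u`, `u, k² ∈ ℚ`, there is `T₀ = T₀(ω)`
such that for all `γ = (a b; c d) ∈ SL₂(ℤ)` with `c > 0`, `cd(ck²+du)(cu+d) ≠ 0`,
`k²Y_γ > X_γ` and `T_γ > T₀`, both `Φ(γ)` and `Ψ(γ)` lie in the Farey interval `J_γ`. -/
theorem Phi_Psi_mem_Farey_interval (ω : ℍ)
    (hu0 : 0 ≤ (ω : ℂ).re) (hu1 : (ω : ℂ).re ≤ 1)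
    (hku : (‖(ω : ℂ)‖) ^ 2 > (ω : ℂ).re)
    (huQ : ∃ q : ℚ, (q : ℝ) = (ω : ℂ).re)
    (hkQ : ∃ q : ℚ, (q : ℝ) = (‖(ω : ℂ)‖) ^ 2) :
    ∃ T₀ : ℝ, ∀ γ : SL(2,ℤ),
      0 < ent γ 1 0 →
      ent γ 1 0 * ent γ 1 1 *
          (ent γ 1 0 * (‖(ω : ℂ)‖) ^ 2 + ent γ 1 1 * (ω : ℂ).re) *
          (ent γ 1 0 * (ω : ℂ).re + ent γ 1 1) ≠ 0 →
      (‖(ω : ℂ)‖) ^ 2 * Yg ω γ > Xg ω γ →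
      Tg ω γ > T₀ →
      ((0 < ent γ 1 1 →
          Phi ω γ ∈ Set.Ioo (ent γ 0 1 / ent γ 1 1) (ent γ 0 0 / ent γ 1 0) ∧
          Psi ω γ ∈ Set.Ioo (ent γ 0 1 / ent γ 1 1) (ent γ 0 0 / ent γ 1 0)) ∧
       (ent γ 1 1 < 0 → 0 < ent γ 1 0 * (ω : ℂ).re + ent γ 1 1 →
          Phi ω γ ∈ Set.Ioo ((ent γ 0 0 + ent γ 0 1) / (ent γ 1 0 + ent γ 1 1))
            (ent γ 0 0 / ent γ 1 0) ∧
          Psi ω γ ∈ Set.Ioo ((ent γ 0 0 + ent γ 0 1) / (ent γ 1 0 + ent γ 1 1))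
            (ent γ 0 0 / ent γ 1 0)) ∧
       (ent γ 1 1 < 0 →
          ent γ 1 0 * (‖(ω : ℂ)‖) ^ 2 + ent γ 1 1 * (ω : ℂ).re < 0 →
          Phi ω γ ∈ Set.Ioo (ent γ 0 1 / ent γ 1 1)
            ((ent γ 0 0 + ent γ 0 1) / (ent γ 1 0 + ent γ 1 1)) ∧
          Psi ω γ ∈ Set.Ioo (ent γ 0 1 / ent γ 1 1)
            ((ent γ 0 0 + ent γ 0 1) / (ent γ 1 0 + ent γ 1 1))) ∧
       (ent γ 1 1 < 0 → ent γ 1 0 * (ω : ℂ).re + ent γ 1 1 < 0 →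
          0 < ent γ 1 0 * (‖(ω : ℂ)‖) ^ 2 + ent γ 1 1 * (ω : ℂ).re →
          Phi ω γ ∈ Set.Ioo (ent γ 0 0 / ent γ 1 0) (ent γ 0 1 / ent γ 1 1) ∧
          Psi ω γ ∈ Set.Ioo (ent γ 0 0 / ent γ 1 0) (ent γ 0 1 / ent γ 1 1))) := by
  obtain ⟨q1, hq1r⟩ := huQ
  obtain ⟨q2, hq2r⟩ := hkQ
  have hv : 0 < (ω : ℂ).im := ω.2
  have hden1 : (0:ℝ) < (q1.den : ℝ) := by exact_mod_cast q1.pos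
  have hden2 : (0:ℝ) < (q2.den : ℝ) := by exact_mod_cast q2.pos
  have hQ0 : (0:ℝ) < (q1.den : ℝ) * (q2.den : ℝ) := mul_pos hden1 hden2
  have hnum1 : (q1.num : ℝ) = (q1.den : ℝ) * (ω : ℂ).re := by
    rw [← hq1r, Rat.cast_def]
    field_simp
  have hnum2 : (q2.num : ℝ) = (q2.den : ℝ) * (‖(ω : ℂ)‖)^2 := by
    rw [← hq2r, Rat.cast_def]
    field_simp
  have key : ∀ r : ℝ, (∃ n : ℤ, (n:ℝ) = ((q1.den : ℝ) * (q2.den : ℝ)) * r) → r ≠ 0 →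
      1/((q1.den : ℝ) * (q2.den : ℝ)) ≤ |r| := by
    rintro r ⟨n, hn⟩ hr
    have hn0 : n ≠ 0 := by
      rintro rfl
      simp only [Int.cast_zero] at hn
      rcases mul_eq_zero.1 hn.symm with h | h
      · exact hQ0.ne' h
      · exact hr h
    have h1 : (1:ℝ) ≤ |(n:ℝ)| := by exact_mod_cast Int.one_le_abs hn0
    rw [hn, abs_mul, abs_of_pos hQ0] at h1
    rw [div_le_iff₀ hQ0]
    linarith
  refine ⟨2*(ω : ℂ).im^2 + 2
      + 16*(2*(ω : ℂ).im^2+3)*((‖(ω : ℂ)‖)^2+1)*((q1.den : ℝ) * (q2.den : ℝ))^2, ?_⟩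
  intro γ hc hne hXY hT
  have hkf : (‖(ω : ℂ)‖)^2 = (ω : ℂ).re^2 + (ω : ℂ).im^2 := by
    rw [Complex.sq_norm, Complex.normSq_apply]; ring
  have hXf : Xg ω γ = (ent γ 0 0 * (ω : ℂ).re + ent γ 0 1)^2 + (ent γ 0 0 * (ω : ℂ).im)^2 := by
    rw [Xg, Complex.sq_norm, Complex.normSq_apply]
    simp only [Complex.add_re, Complex.add_im, Complex.mul_re, Complex.mul_im,
      Complex.ofReal_re, Complex.ofReal_im]
    ring
  have hYf : Yg ω γ = (ent γ 1 0 * (ω : ℂ).re + ent γ 1 1)^2 + (ent γ 1 0 * (ω : ℂ).im)^2 := by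
    rw [Yg, Complex.sq_norm, Complex.normSq_apply]
    simp only [Complex.add_re, Complex.add_im, Complex.mul_re, Complex.mul_im,
      Complex.ofReal_re, Complex.ofReal_im]
    ring
  have hZf : Zg ω γ = (ent γ 0 0 * (ω : ℂ).re + ent γ 0 1) * (ent γ 1 0 * (ω : ℂ).re + ent γ 1 1)
      + ent γ 0 0 * ent γ 1 0 * (ω : ℂ).im^2 := by
    rw [Zg, hkf]; ring
  have hdet : ent γ 0 0 * ent γ 1 1 - ent γ 0 1 * ent γ 1 0 = 1 := by
    have h := γ.2
    rw [Matrix.det_fin_two] at h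
    simp only [ent]
    exact_mod_cast h
  have hC1 : 1 ≤ ent γ 1 0 := by
    have h : (0:ℤ) < γ 1 0 := by
      simp only [ent] at hc
      exact_mod_cast hc
    have h2 : (1:ℤ) ≤ γ 1 0 := h
    simp only [ent]
    exact_mod_cast h2
  have hd0 : ent γ 1 1 ≠ 0 := fun h => hne (by rw [h]; ring)
  have hcu0 : ent γ 1 0 * (ω : ℂ).re + ent γ 1 1 ≠ 0 := fun h => hne (by rw [h]; ring)
  have hck0 : ent γ 1 0 * (‖(ω : ℂ)‖)^2 + ent γ 1 1 * (ω : ℂ).re ≠ 0 :=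
    fun h => hne (by rw [h]; ring)
  have hq1b := key (ent γ 1 0 * (ω : ℂ).re + ent γ 1 1)
    ⟨γ 1 0 * (q1.num * (q2.den : ℤ)) + γ 1 1 * ((q1.den : ℤ) * (q2.den : ℤ)), by
      simp only [ent]
      push_cast
      linear_combination ((γ 1 0 : ℤ) : ℝ) * (q2.den : ℝ) * hnum1⟩ hcu0
  have hq2b := key (ent γ 1 0 * (‖(ω : ℂ)‖)^2 + ent γ 1 1 * (ω : ℂ).re)
    ⟨γ 1 0 * ((q1.den : ℤ) * q2.num) + γ 1 1 * (q1.num * (q2.den : ℤ)), by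
      simp only [ent]
      push_cast
      linear_combination ((γ 1 0 : ℤ) : ℝ) * (q1.den : ℝ) * hnum2
        + ((γ 1 1 : ℤ) : ℝ) * (q2.den : ℝ) * hnum1⟩ hck0
  have hq3b : ent γ 1 1 < 0 → 1/((q1.den : ℝ) * (q2.den : ℝ))
      ≤ ent γ 1 0 * ((‖(ω : ℂ)‖)^2 - (ω : ℂ).re) + ent γ 1 1 * ((ω : ℂ).re - 1) := by
    intro hD
    have hNpos : 0 < ent γ 1 0 * ((‖(ω : ℂ)‖)^2 - (ω : ℂ).re)
        + ent γ 1 1 * ((ω : ℂ).re - 1) := by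
      have h1 : 0 < ent γ 1 0 * ((‖(ω : ℂ)‖)^2 - (ω : ℂ).re) :=
        mul_pos hc (sub_pos.2 hku)
      have h2 : 0 ≤ (-(ent γ 1 1)) * (1 - (ω : ℂ).re) :=
        mul_nonneg (by linarith) (by linarith)
      linarith
    have hb := key (ent γ 1 0 * ((‖(ω : ℂ)‖)^2 - (ω : ℂ).re)
        + ent γ 1 1 * ((ω : ℂ).re - 1))
      ⟨γ 1 0 * ((q1.den : ℤ) * q2.num - q1.num * (q2.den : ℤ))
        + γ 1 1 * (q1.num * (q2.den : ℤ) - (q1.den : ℤ) * (q2.den : ℤ)), by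
        simp only [ent]
        push_cast
        linear_combination ((γ 1 0 : ℤ) : ℝ) * (q1.den : ℝ) * hnum2
          + (((γ 1 1 : ℤ) : ℝ) - ((γ 1 0 : ℤ) : ℝ)) * (q2.den : ℝ) * hnum1⟩ hNpos.ne'
    rwa [abs_of_pos hNpos] at hb
  have hcoe : ((γ • ω : ℍ) : ℂ)
      = ((ent γ 0 0 : ℂ) * ω + (ent γ 0 1 : ℂ)) / ((ent γ 1 0 : ℂ) * ω + (ent γ 1 1 : ℂ)) := by
    rw [UpperHalfPlane.specialLinearGroup_apply]
    simp [ent]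
  have hns : Complex.normSq ((ent γ 1 0 : ℂ) * ω + (ent γ 1 1 : ℂ)) = Yg ω γ := by
    rw [Yg, Complex.sq_norm]
  have hre : Phi ω γ = ((ent γ 0 0 * (ω : ℂ).re + ent γ 0 1) * (ent γ 1 0 * (ω : ℂ).re + ent γ 1 1)
      + (ent γ 0 0 * (ω : ℂ).im) * (ent γ 1 0 * (ω : ℂ).im)) / Yg ω γ := by
    rw [Phi, hcoe, Complex.div_re, hns, ← add_div]
    congr 1
    simp only [Complex.add_re, Complex.add_im, Complex.mul_re, Complex.mul_im,
      Complex.ofReal_re, Complex.ofReal_im]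
    ring
  have hphi : Phi ω γ = Zg ω γ / Yg ω γ := by
    rw [hre, hZf]
    congr 1
    ring
  have hQsqpos : (0:ℝ) < 16*(2*(ω : ℂ).im^2+3)*((‖(ω : ℂ)‖)^2+1)
      *((q1.den : ℝ) * (q2.den : ℝ))^2 := by
    have h1 : (0:ℝ) < 2*(ω : ℂ).im^2+3 := by nlinarith [mul_pos hv hv]
    have h2 : (0:ℝ) < (‖(ω : ℂ)‖)^2+1 := by positivity
    exact mul_pos (mul_pos (mul_pos (by norm_num) h1) h2) (pow_pos hQ0 2)
  have hT2v : 2*(ω : ℂ).im^2 < Tg ω γ := by linarith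
  obtain ⟨he0, heT⟩ := eps_aux (Tg ω γ) (2*(ω : ℂ).im^2)
    (by nlinarith [mul_pos hv hv]) hT2v
  exact main_gamma ((ω : ℂ).re) ((ω : ℂ).im) ((‖(ω : ℂ)‖)^2)
    ((q1.den : ℝ) * (q2.den : ℝ))
    (ent γ 0 0) (ent γ 0 1) (ent γ 1 0) (ent γ 1 1)
    (Xg ω γ) (Yg ω γ) (Zg ω γ) (Tg ω γ) (epsT ω γ) (Phi ω γ) (Psi ω γ)
    hv hu0 hu1 hkf hku hXf hYf hZf hdet hC1 hQ0 hq1b hq2b hq3b he0 heT rfl hphi rfl hT
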